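/- For any R ≥ r > 0, the volume of the solid torus of tube radius r around a circle of radius R in ℝ³ equals 2π²r²R. -/

import Mathlib

/-!
The distance from `p` to the circle is `√((ρ - R)² + z²)`, where `ρ` is the distance of `p` from
the axis and `z` its height (reverse triangle inequality in the horizontal plane). Hence the
horizontal slice of the solid torus at height `|z| ≤ r` is the planar annulus
`R - s ≤ ρ ≤ R + s` with `s = √(r² - z²)`, of area `4πRs`, and by Cavalieri's principle the
volume is `4πR ∫ √(r² - z²) dz = 4πR · πr²/2`.
-/

open MeasureTheory Real

/-- The circle of radius `R` in the `z = 0` plane of `ℝ³`, centered at the origin. -/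
def circle3 (R : ℝ) : Set (EuclideanSpace ℝ (Fin 3)) :=
  {p | (p 0) ^ 2 + (p 1) ^ 2 = R ^ 2 ∧ p 2 = 0}

lemma exists_norm_eq_dist_eq_abs_sub {E : Type*} [NormedAddCommGroup E] [NormedSpace ℝ E]
    [Nontrivial E] (v : E) {R : ℝ} (hR : 0 ≤ R) : ∃ w : E, ‖w‖ = R ∧ dist v w = |‖v‖ - R| := by
  rcases eq_or_ne v 0 with rfl | hv
  · obtain ⟨w, hw⟩ := exists_norm_eq E hR
    exact ⟨w, hw, by rw [dist_zero_left, hw, norm_zero, zero_sub, abs_neg, abs_of_nonneg hR]⟩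
  · have hv' : ‖v‖ ≠ 0 := norm_ne_zero_iff.2 hv
    refine ⟨(R / ‖v‖) • v, ?_, ?_⟩
    · rw [norm_smul, norm_div, norm_norm, Real.norm_of_nonneg hR, div_mul_cancel₀ _ hv']
    · have : v - (R / ‖v‖) • v = ((‖v‖ - R) / ‖v‖) • v := by
        rw [sub_div, div_self hv', sub_smul, one_smul]
      rw [dist_eq_norm, this, norm_smul, norm_div, norm_norm, Real.norm_eq_abs,
        div_mul_cancel₀ _ hv']

def horizProj (p : EuclideanSpace ℝ (Fin 3)) : EuclideanSpace ℝ (Fin 2) := !₂[p 0, p 1]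

lemma norm_horizProj_sq (p : EuclideanSpace ℝ (Fin 3)) :
    ‖horizProj p‖ ^ 2 = p 0 ^ 2 + p 1 ^ 2 := by
  simp [horizProj, EuclideanSpace.norm_sq_eq, Fin.sum_univ_two]

lemma dist_sq_eq_dist_horizProj_sq_add (p q : EuclideanSpace ℝ (Fin 3)) :
    dist p q ^ 2 = dist (horizProj p) (horizProj q) ^ 2 + (p 2 - q 2) ^ 2 := by
  simp [dist_eq_norm, EuclideanSpace.real_norm_sq_eq, Fin.sum_univ_two, Fin.sum_univ_three,
    horizProj]

lemma mem_circle3_iff {R : ℝ} (hR : 0 ≤ R) {q : EuclideanSpace ℝ (Fin 3)} :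
    q ∈ circle3 R ↔ ‖horizProj q‖ = R ∧ q 2 = 0 := by
  rw [← sq_eq_sq₀ (norm_nonneg _) hR, norm_horizProj_sq]
  rfl

lemma infDist_circle3 {R : ℝ} (hR : 0 ≤ R) (p : EuclideanSpace ℝ (Fin 3)) :
    Metric.infDist p (circle3 R) = √((‖horizProj p‖ - R) ^ 2 + p 2 ^ 2) := by
  set v := horizProj p
  have hdist : ∀ q, dist p q = √(dist v (horizProj q) ^ 2 + (p 2 - q 2) ^ 2) := fun q => by
    rw [← dist_sq_eq_dist_horizProj_sq_add, sqrt_sq dist_nonneg]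
  obtain ⟨w, hwR, hvw⟩ := exists_norm_eq_dist_eq_abs_sub v hR
  have hw : horizProj !₂[w 0, w 1, 0] = w := by
    ext i; fin_cases i <;> rfl
  have hleast : IsLeast ((dist p ·) '' circle3 R) (√((‖v‖ - R) ^ 2 + p 2 ^ 2)) := by
    constructor
    · refine ⟨!₂[w 0, w 1, 0], (mem_circle3_iff hR).2 ⟨hw ▸ hwR, rfl⟩, ?_⟩
      simp [hdist, hw, hvw]
    · rintro _ ⟨q, hq, rfl⟩
      obtain ⟨hqR, hq2⟩ := (mem_circle3_iff hR).1 hq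
      show _ ≤ dist p q
      rw [hdist, hq2, sub_zero, ← hqR, ← sq_abs (‖v‖ - _)]
      gcongr
      exact abs_norm_sub_norm_le _ _
  exact (Metric.isGLB_infDist hleast.nonempty.of_image).unique hleast.isGLB

lemma measurePreserving_height_horizProj :
    MeasurePreserving (fun p : EuclideanSpace ℝ (Fin 3) => (p 2, horizProj p)) := by
  have h := ((MeasurePreserving.id volume).prod (PiLp.volume_preserving_toLp (Fin 2))).comp
    ((volume_preserving_piFinSuccAbove (fun _ : Fin 3 => ℝ) 2).comp
      (PiLp.volume_preserving_ofLp (Fin 3)))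
  rw [← Measure.volume_eq_prod] at h
  convert h using 1
  funext p
  ext i
  · rfl
  · fin_cases i <;> rfl

lemma volume_annulus_fin_two {a b : ℝ} (ha : 0 ≤ a) (hab : a ≤ b) :
    volume {x : EuclideanSpace ℝ (Fin 2) | a ≤ ‖x‖ ∧ ‖x‖ ≤ b} = .ofReal (π * (b ^ 2 - a ^ 2)) := by
  have hset : {x : EuclideanSpace ℝ (Fin 2) | a ≤ ‖x‖ ∧ ‖x‖ ≤ b} =
      Metric.closedBall 0 b \ Metric.ball 0 a := by
    ext x
    simp [and_comm]
  have hsub : Metric.ball (0 : EuclideanSpace ℝ (Fin 2)) a ⊆ Metric.closedBall 0 b :=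
    Metric.ball_subset_closedBall.trans (Metric.closedBall_subset_closedBall hab)
  rw [hset, measure_sdiff hsub measurableSet_ball.nullMeasurableSet measure_ball_lt_top.ne]
  simp only [EuclideanSpace.volume_closedBall_fin_two, EuclideanSpace.volume_ball_fin_two]
  rw [← ENNReal.ofReal_pow ha, ← ENNReal.ofReal_pow (ha.trans hab),
    ← ENNReal.ofReal_mul (by positivity), ← ENNReal.ofReal_mul (by positivity),
    ← ENNReal.ofReal_sub _ (by positivity)]
  congr 1
  ring

-- For `r < |z|` both sides vanish: the slice is empty and `√` of a negative number is `0`.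
lemma volume_torus_slice {r R : ℝ} (hr : 0 ≤ r) (hrR : r ≤ R) (z : ℝ) :
    volume {x : EuclideanSpace ℝ (Fin 2) | (‖x‖ - R) ^ 2 + z ^ 2 ≤ r ^ 2}
      = .ofReal (4 * π * R * √(r ^ 2 - z ^ 2)) := by
  rcases le_or_gt (z ^ 2) (r ^ 2) with hz | hz
  · set s := √(r ^ 2 - z ^ 2)
    have hs : s ≤ r := (sqrt_le_left hr).2 (by linarith [sq_nonneg z])
    have hset : {x : EuclideanSpace ℝ (Fin 2) | (‖x‖ - R) ^ 2 + z ^ 2 ≤ r ^ 2}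
        = {x | R - s ≤ ‖x‖ ∧ ‖x‖ ≤ R + s} := by
      ext x
      simp only [Set.mem_ofPred_eq, ← le_sub_iff_add_le, Real.sq_le (sub_nonneg.2 hz)]
      constructor <;> rintro ⟨h₁, h₂⟩ <;> constructor <;> linarith
    rw [hset, volume_annulus_fin_two (by linarith) (by linarith [sqrt_nonneg (r ^ 2 - z ^ 2)])]
    congr 1
    ring
  · have hset : {x : EuclideanSpace ℝ (Fin 2) | (‖x‖ - R) ^ 2 + z ^ 2 ≤ r ^ 2} = ∅ := by
      ext x
      simp only [Set.mem_ofPred_eq, Set.mem_empty_iff_false, iff_false, not_le]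
      nlinarith [sq_nonneg (‖x‖ - R)]
    rw [hset, sqrt_eq_zero'.2 (by linarith), measure_empty, mul_zero, ENNReal.ofReal_zero]

lemma lintegral_sqrt_sq_sub_sq {r : ℝ} (hr : 0 < r) :
    ∫⁻ z, .ofReal √(r ^ 2 - z ^ 2) = .ofReal (π * r ^ 2 / 2) := by
  have hsupp :
      Function.support (fun z : ℝ => ENNReal.ofReal √(r ^ 2 - z ^ 2)) ⊆ Set.Icc (-r) r := by
    refine Function.support_subset_iff'.2 fun z hz => ?_
    rw [Set.mem_Icc, not_and_or, not_le, not_le] at hz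
    rw [sqrt_eq_zero'.2 (by rcases hz with hz | hz <;> nlinarith), ENNReal.ofReal_zero]
  have hcont : Continuous fun z : ℝ => √(r ^ 2 - z ^ 2) := by fun_prop
  rw [← setLIntegral_eq_of_support_subset hsupp, ← ofReal_integral_eq_lintegral_ofReal
    hcont.integrableOn_Icc (.of_forall fun _ => sqrt_nonneg _), integral_Icc_eq_integral_Ioc,
    ← intervalIntegral.integral_of_le (by linarith)]
  have hscale : ∀ z, √(r ^ 2 - z ^ 2) = r * √(1 - (z / r) ^ 2) := fun z => by
    rw [← sqrt_sq hr.le, ← sqrt_mul (sq_nonneg r), sqrt_sq hr.le]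
    field_simp
  simp_rw [hscale, intervalIntegral.integral_const_mul,
    intervalIntegral.integral_comp_div (fun t => √(1 - t ^ 2)) hr.ne', neg_div, div_self hr.ne',
    integral_sqrt_one_sub_sq, smul_eq_mul]
  congr 1
  ring

/-- Pappus/Archimedes: for `R ≥ r > 0`, the volume of the solid torus of tube radius
`r` around a circle of radius `R` in `ℝ³` equals `2π²r²R`. -/
theorem volume_solid_torus (r R : ℝ) (hr : 0 < r) (hrR : r ≤ R) :
    volume {p : EuclideanSpace ℝ (Fin 3) | Metric.infDist p (circle3 R) ≤ r}
      = ENNReal.ofReal (2 * π ^ 2 * r ^ 2 * R) := by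
  have hR : 0 ≤ R := hr.le.trans hrR
  set U : Set (ℝ × EuclideanSpace ℝ (Fin 2)) := {q | (‖q.2‖ - R) ^ 2 + q.1 ^ 2 ≤ r ^ 2}
  have hU : MeasurableSet U := measurableSet_le (by fun_prop) measurable_const
  have htorus : {p : EuclideanSpace ℝ (Fin 3) | Metric.infDist p (circle3 R) ≤ r}
      = (fun p => (p 2, horizProj p)) ⁻¹' U := by
    ext p
    rw [Set.mem_ofPred_eq, infDist_circle3 hR, sqrt_le_left hr.le]
    rfl
  have hslice (z : ℝ) :
      volume (Prod.mk z ⁻¹' U) = .ofReal (4 * π * R) * .ofReal √(r ^ 2 - z ^ 2) := by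
    rw [← ENNReal.ofReal_mul (mul_nonneg (by positivity) hR)]
    exact volume_torus_slice hr.le hrR z
  rw [htorus, measurePreserving_height_horizProj.measure_preimage hU.nullMeasurableSet,
    Measure.volume_eq_prod, Measure.prod_apply hU]
  simp_rw [hslice]
  rw [lintegral_const_mul' _ _ ENNReal.ofReal_ne_top, lintegral_sqrt_sq_sub_sq hr,
    ← ENNReal.ofReal_mul (mul_nonneg (by positivity) hR)]
  congr 1
  ring
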